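/- Rectangle search terminates on finite state spaces: if the set of states V is finite and all edge costs are strictly positive, then for any heuristic h ≥ 0 the main loop of rectangle search executes only finitely many iterations (every state is inserted into the open lists only finitely many times). -/

import Mathlib

/-!
Formalization of rectangle search (Lemons, Ruml et al., "Rectangle Search:
An Anytime Beam Search").

A search problem consists of states `V`, a start state, a Boolean goal
predicate, a successor function `succ : V → Finset V` and rational edge
costs.  Rectangle search is modeled operationally: its state `RS` records
the list of per-depth open lists (priority queues ordered by the
distance-to-go estimate `d`), the closed set (a map from states to recorded
g-values), the incumbent (`none` = cost ∞), the `depth` counter, and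
instrumentation fields: `offset` (number of depth levels trimmed from the
front), `expCount` (number of main-loop expansions per absolute depth
level), `totalExp` (total main-loop expansions), `prunedCount` (number of
nodes discarded because f(n) ≥ g(incumbent)) and `emptySel` (set when a
selection is attempted on an exhausted open list).  `run P h d a k` is the
state after `k` iterations of the main loop with aspect `a`.
-/

namespace RectangleSearchFormal

structure SearchProblem (V : Type) where
  start : V
  isGoal : V → Bool
  succ : V → Finset V
  cost : V → V → ℚ

variable {V : Type}

/-- `p` is a path: a nonempty list of states, each a successor of the previous. -/
def IsPath (P : SearchProblem V) : List V → Prop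
  | [] => False
  | [_] => True
  | u :: v :: rest => v ∈ P.succ u ∧ IsPath P (v :: rest)

/-- The cost of a path: the sum of its edge costs. -/
def pathCost (P : SearchProblem V) : List V → ℚ
  | [] => 0
  | [_] => 0
  | u :: v :: rest => P.cost u v + pathCost P (v :: rest)

/-- `p` is a path starting at `u` and ending at `w`. -/
def IsPathFromTo (P : SearchProblem V) (p : List V) (u w : V) : Prop :=
  IsPath P p ∧ p.head? = some u ∧ p.getLast? = some w

/-- `p` is a path from the start state to a goal state. -/
def IsSolutionPath (P : SearchProblem V) (p : List V) : Prop :=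
  ∃ w, IsPathFromTo P p P.start w ∧ P.isGoal w = true

/-- All edge costs are strictly positive. -/
def EdgeCostsPos (P : SearchProblem V) : Prop :=
  ∀ u v, v ∈ P.succ u → 0 < P.cost u v

/-- `h` is admissible: for every state `n` and every path from `n` to a goal
state, `h n` is at most the cost of that path. -/
def Admissible (P : SearchProblem V) (h : V → ℚ) : Prop :=
  ∀ n w p, IsPathFromTo P p n w → P.isGoal w = true → h n ≤ pathCost P p

/-- A search node: a state together with the g-value and the path by which
it was reached from the start state. -/
structure Node (V : Type) where
  state : V
  g : ℚ
  path : List V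

/-- The state of rectangle search. -/
structure RS (V : Type) where
  openlists : List (List (Node V))
  closed : V → Option ℚ
  incumbent : Option (Node V)
  depth : ℕ
  offset : ℕ
  expCount : ℕ → ℕ
  totalExp : ℕ
  prunedCount : ℕ
  emptySel : Bool

variable [DecidableEq V]

/-- The cost of the incumbent (∞ when none has been found yet). -/
def incCost (σ : RS V) : WithTop ℚ :=
  match σ.incumbent with
  | none => ⊤
  | some n => (n.g : WithTop ℚ)

/-- Repeatedly remove the front node of an open list, discarding (pruning)
it while `f(n) ≥ g(incumbent)`; returns the selected node (if any), the
rest of the list, and the number of pruned nodes. -/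
def popGood (h : V → ℚ) (bound : WithTop ℚ) :
    List (Node V) → Option (Node V) × List (Node V) × ℕ
  | [] => (none, [], 0)
  | n :: rest =>
    if ((n.g + h n.state : ℚ) : WithTop ℚ) < bound then (some n, rest, 0)
    else
      let r := popGood h bound rest
      (r.1, r.2.1, r.2.2 + 1)

/-- Insertion into a priority queue ordered by the distance-to-go estimate `d`. -/
def insertByD (d : V → ℚ) (n : Node V) : List (Node V) → List (Node V)
  | [] => [n]
  | m :: rest =>
    if d n.state ≤ d m.state then n :: m :: rest else m :: insertByD d n rest

def padTo (ls : List (List (Node V))) (k : ℕ) : List (List (Node V)) :=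
  ls ++ List.replicate (k - ls.length) ([] : List (Node V))

def insertOpen (d : V → ℚ) (σ : RS V) (i : ℕ) (n : Node V) : RS V :=
  let ls := padTo σ.openlists (i + 1)
  { σ with openlists := ls.set i (insertByD d n (ls.getD i [])) }

/-- Process one generated child `c` of `parent`: a child with
`f(child) < g(incumbent)` that is a goal becomes the new incumbent; a
non-goal child with `f(child) < g(incumbent)` is inserted into
`openlists[tgt]` unless it appears in closed with a g-value that is not
larger. -/
def processChild (P : SearchProblem V) (h d : V → ℚ) (parent : Node V) (tgt : ℕ)
    (σ : RS V) (c : V) : RS V :=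
  let gc := parent.g + P.cost parent.state c
  if ((gc + h c : ℚ) : WithTop ℚ) < incCost σ then
    if P.isGoal c then
      { σ with incumbent := some ⟨c, gc, parent.path ++ [c]⟩ }
    else
      match σ.closed c with
      | some gdup =>
          if gc < gdup then insertOpen d σ tgt ⟨c, gc, parent.path ++ [c]⟩ else σ
      | none => insertOpen d σ tgt ⟨c, gc, parent.path ++ [c]⟩
  else σ

/-- Generate all successors of `parent`, placing surviving children into
`openlists[tgt]`. -/
noncomputable def expandNode (P : SearchProblem V) (h d : V → ℚ)
    (parent : Node V) (tgt : ℕ) (σ : RS V) : RS V :=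
  (P.succ parent.state).toList.foldl (processChild P h d parent tgt) σ

/-- Select & expand one node from `openlists[i]` (Algorithm 2): prune front
nodes with `f ≥ g(incumbent)`; if a node survives, add it to closed, count
the expansion at absolute depth level `offset + i + 1`, and expand it into
`openlists[i+1]`. -/
noncomputable def selectExpand (P : SearchProblem V) (h d : V → ℚ)
    (σ : RS V) (i : ℕ) : RS V :=
  let r := popGood h (incCost σ) (σ.openlists.getD i [])
  let σ1 := { σ with openlists := σ.openlists.set i r.2.1,
                     prunedCount := σ.prunedCount + r.2.2 }
  match r.1 with
  | none => { σ1 with emptySel := true }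
  | some n =>
    let lvl := σ.offset + i + 1
    let σ2 := { σ1 with
        closed := fun v => if v = n.state then some n.g else σ1.closed v,
        expCount := fun j => if j = lvl then σ1.expCount j + 1 else σ1.expCount j,
        totalExp := σ1.totalExp + 1 }
    expandNode P h d n (i + 1) σ2

def trimFront : List (List (Node V)) → ℕ × List (List (Node V))
  | [] => (0, [])
  | [] :: rest => let r := trimFront rest; (r.1 + 1, r.2)
  | l :: rest => (0, l :: rest)

/-- Trim empty lists from the start and end of `openlists`, recording the
number trimmed from the front in `offset`. -/
def trim (σ : RS V) : RS V :=
  let f := trimFront σ.openlists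
  { σ with offset := σ.offset + f.1,
           openlists := (f.2.reverse.dropWhile List.isEmpty).reverse }

/-- One iteration of the main loop of rectangle search with aspect `a`
(Algorithm 1).  If every open list is empty the loop has terminated and the
state is unchanged. -/
noncomputable def mainIter (P : SearchProblem V) (h d : V → ℚ) (a : ℕ) (σ : RS V) : RS V :=
  if σ.openlists.all List.isEmpty then σ
  else
    let L := σ.openlists.length
    let D := σ.depth
    -- (i) one select & expand at every existing depth level except the deepest
    let σ1 := (List.range (L - 1)).foldl (selectExpand P h d) σ
    -- (ii) append `a` new empty open lists
    let σ2 := { σ1 with openlists := σ1.openlists ++ List.replicate a [] }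
    -- (iii) `depth`-many select & expands at each newly reachable level except the last
    let σ3 := (List.range a).foldl
        (fun σ' k => (List.range D).foldl
          (fun σ'' _ => selectExpand P h d σ'' (L - 1 + k)) σ') σ2
    -- (iv) increase depth by `a` and trim empty lists from both ends
    trim { σ3 with depth := σ3.depth + a }

/-- The initial state: the start state is expanded, with its children
inserted into `openlists[0]`, the incumbent cost is ∞ and `depth = 1`. -/
noncomputable def initRS (P : SearchProblem V) (h d : V → ℚ) : RS V :=
  expandNode P h d ⟨P.start, 0, [P.start]⟩ 0
    { openlists := [[]],
      closed := fun v => if v = P.start then some 0 else none,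
      incumbent := none, depth := 1, offset := 0,
      expCount := fun _ => 0, totalExp := 0, prunedCount := 0, emptySel := false }

/-- The state of rectangle search after `k` iterations of the main loop. -/
noncomputable def run (P : SearchProblem V) (h d : V → ℚ) (a : ℕ) (k : ℕ) : RS V :=
  (mainIter P h d a)^[k] (initRS P h d)

/-- The main loop has terminated: no open nodes remain at any depth level. -/
def Done (σ : RS V) : Prop := ∀ l ∈ σ.openlists, l = []

/-!
Let `c₀ > 0` be the least edge cost. Every open node at absolute depth level `k` has
`g ≥ (k + 1) c₀`. Each iteration removes the head of the front open list, and trimming drops the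
front list once it is empty; so if the loop never stopped, the absolute level of the front list,
and with it the `g`-value of its head, would grow without bound. This is impossible. Once an
incumbent of cost `B` exists, every node opened later has `g ≤ f < B`. If there is never one, the
closed set eventually stops growing; from then on the head of the front list is closed one
iteration later, and a node of a closed state is only opened with `g` below the recorded value,
so the `g`-values that matter stay below the maximum of finitely many recorded ones.
-/

end RectangleSearchFormal

namespace List

variable {α : Type*}

theorem getD_append_replicate (l : List α) (d : α) (k i : ℕ) :
    (l ++ replicate k d).getD i d = l.getD i d := by
  rcases lt_or_ge i l.length with hi | hi
  · exact getD_append l _ d i hi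
  · rw [getD_append_right l _ d i hi, getD_eq_default l d hi, getD_eq_getElem?_getD,
      getElem?_getD_replicate_default_eq]

theorem getD_set_of_ne (l : List α) (a d : α) {i j : ℕ} (hij : i ≠ j) :
    (l.set i a).getD j d = l.getD j d := by
  simp only [getD_eq_getElem?_getD, getElem?_set_ne hij]

theorem getD_drop (l : List α) (d : α) (k i : ℕ) : (l.drop k).getD i d = l.getD (k + i) d := by
  simp only [getD_eq_getElem?_getD, getElem?_drop]

theorem mem_getD_set {l : List (List α)} {y : List α} {x : α} {i j : ℕ}
    (hx : x ∈ (l.set i y).getD j []) : (j = i ∧ x ∈ y) ∨ x ∈ l.getD j [] := by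
  rcases eq_or_ne i j with rfl | hij
  · rcases lt_or_ge i l.length with hi | hi
    · simp only [getD_eq_getElem?_getD, getElem?_set_self hi, Option.getD_some] at hx
      exact Or.inl ⟨rfl, hx⟩
    · rw [set_eq_of_length_le hi] at hx
      exact Or.inr hx
  · rw [getD_set_of_ne l y [] hij] at hx
    exact Or.inr hx

theorem lt_length_of_mem_getD {l : List (List α)} {x : α} {i : ℕ} (hx : x ∈ l.getD i []) :
    i < l.length := by
  by_contra! hi
  rw [getD_eq_default _ _ hi] at hx
  exact not_mem_nil hx

theorem mem_flatten_of_mem_getD {l : List (List α)} {x : α} {i : ℕ} (hx : x ∈ l.getD i []) :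
    x ∈ l.flatten := by
  have hi := lt_length_of_mem_getD hx
  rw [getD_eq_getElem _ _ hi] at hx
  exact mem_flatten_of_mem (getElem_mem hi) hx

theorem IsPrefix.mem_getD {l₁ l₂ : List (List α)} (hp : l₁ <+: l₂) {x : α} {i : ℕ}
    (hx : x ∈ l₁.getD i []) : x ∈ l₂.getD i [] := by
  obtain ⟨t, rfl⟩ := hp
  rwa [getD_append _ _ _ _ (lt_length_of_mem_getD hx)]

theorem foldl_invariant {β : Type*} {f : α → β → α} {l : List β} (Q : α → Prop)
    (hf : ∀ a, ∀ b ∈ l, Q a → Q (f a b)) {a : α} (ha : Q a) : Q (l.foldl f a) := by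
  induction l generalizing a with
  | nil => exact ha
  | cons b l ih =>
    exact ih (fun a' b' hb' => hf a' b' (List.mem_cons_of_mem b hb')) (hf a b List.mem_cons_self ha)

end List

theorem Relation.reflTransGen_foldl {α β : Type*} {r : α → α → Prop} {f : α → β → α}
    (l : List β) (hf : ∀ a b, Relation.ReflTransGen r a (f a b)) (a : α) :
    Relation.ReflTransGen r a (l.foldl f a) :=
  List.foldl_invariant (Relation.ReflTransGen r a) (fun a' b _ h => h.trans (hf a' b))
    Relation.ReflTransGen.refl

namespace RectangleSearchFormal

open Filter Relation

variable {V : Type}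

theorem EdgeCostsPos.exists_pos_le_cost [Finite V] {P : SearchProblem V} (hpos : EdgeCostsPos P) :
    ∃ c₀ : ℚ, 0 < c₀ ∧ ∀ u v, v ∈ P.succ u → c₀ ≤ P.cost u v := by
  by_cases hedge : Nonempty (Σ u, P.succ u)
  · obtain ⟨⟨u, v, hv⟩, hmin⟩ := Finite.exists_min fun e : Σ u, P.succ u => P.cost e.1 e.2
    exact ⟨_, hpos u v hv, fun u' v' hv' => hmin ⟨u', v', hv'⟩⟩
  · exact ⟨1, one_pos, fun u v hv => (hedge ⟨⟨u, v, hv⟩⟩).elim⟩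

section Queues

theorem popGood_snd_suffix_tail (h : V → ℚ) (b : WithTop ℚ) :
    ∀ l : List (Node V), (popGood h b l).2.1 <:+ l.tail
  | [] => List.suffix_refl []
  | n :: rest => by
    unfold popGood
    split
    · exact List.suffix_refl rest
    · exact (popGood_snd_suffix_tail h b rest).trans (List.tail_suffix rest)

theorem mem_of_popGood_fst (h : V → ℚ) (b : WithTop ℚ) :
    ∀ {l : List (Node V)} {n : Node V}, (popGood h b l).1 = some n → n ∈ l
  | [], _, hn => by simp [popGood] at hn
  | m :: rest, n, hn => by
    unfold popGood at hn
    split at hn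
    · cases hn; exact List.mem_cons_self
    · exact List.mem_cons_of_mem m (mem_of_popGood_fst h b hn)

theorem popGood_top_cons (h : V → ℚ) (n : Node V) (l : List (Node V)) :
    popGood h ⊤ (n :: l) = (some n, l, 0) := by
  simp [popGood]

theorem insertByD_perm (d : V → ℚ) (n : Node V) :
    ∀ l : List (Node V), (insertByD d n l).Perm (n :: l)
  | [] => List.Perm.refl _
  | m :: rest => by
    unfold insertByD
    split
    · exact List.Perm.refl _
    · exact ((insertByD_perm d n rest).cons m).trans (List.Perm.swap n m rest)

theorem mem_insertOpen (d : V → ℚ) {σ : RS V} {t j : ℕ} {n x : Node V}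
    (hx : x ∈ (insertOpen d σ t n).openlists.getD j []) :
    x ∈ σ.openlists.getD j [] ∨ (j = t ∧ x = n) := by
  rcases List.mem_getD_set hx with ⟨rfl, hx⟩ | hx
  · rcases List.mem_cons.1 ((insertByD_perm d n _).mem_iff.1 hx) with rfl | hx
    · exact Or.inr ⟨rfl, rfl⟩
    · exact Or.inl (by rwa [padTo, List.getD_append_replicate] at hx)
  · exact Or.inl (by rwa [padTo, List.getD_append_replicate] at hx)

theorem insertOpen_getD_of_ne (d : V → ℚ) {σ : RS V} {t j : ℕ} (n : Node V) (hj : j ≠ t) :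
    (insertOpen d σ t n).openlists.getD j [] = σ.openlists.getD j [] := by
  rw [insertOpen, List.getD_set_of_ne _ _ _ hj.symm, padTo, List.getD_append_replicate]

end Queues

section Expansion

variable (P : SearchProblem V) (h d : V → ℚ)

theorem processChild_cases (parent : Node V) (tgt : ℕ) (σ : RS V) (c : V) :
    processChild P h d parent tgt σ c = σ ∨
    ∃ x : Node V, x.state = c ∧ x.g = parent.g + P.cost parent.state c ∧
      ((x.g + h c : ℚ) : WithTop ℚ) < incCost σ ∧
      (processChild P h d parent tgt σ c = { σ with incumbent := some x } ∨
        (processChild P h d parent tgt σ c = insertOpen d σ tgt x ∧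
          ∀ g, σ.closed c = some g → x.g < g)) := by
  dsimp only [processChild]
  split_ifs with hf
  · exact Or.inr ⟨_, rfl, rfl, hf, Or.inl rfl⟩
  · split
    · next g hg =>
      split_ifs with hlt
      · exact Or.inr ⟨_, rfl, rfl, hf, Or.inr ⟨rfl, fun g' hg' => by simp_all⟩⟩
      · exact Or.inl rfl
    · next hnone => exact Or.inr ⟨_, rfl, rfl, hf, Or.inr ⟨rfl, by simp [hnone]⟩⟩
  · exact Or.inl rfl

structure IsAdmittedChild (bound : WithTop ℚ) (closed : V → Option ℚ) (parent x : Node V) :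
    Prop where
  mem_succ : x.state ∈ P.succ parent.state
  g_eq : x.g = parent.g + P.cost parent.state x.state
  f_lt : ((x.g + h x.state : ℚ) : WithTop ℚ) < bound
  lt_closed : ∀ g, closed x.state = some g → x.g < g

variable {P h d}

theorem processChild_closed (parent : Node V) (tgt : ℕ) (σ : RS V) (c : V) :
    (processChild P h d parent tgt σ c).closed = σ.closed := by
  rcases processChild_cases P h d parent tgt σ c with he | ⟨x, -, -, -, he | ⟨he, -⟩⟩ <;>
    simp only [he, insertOpen]

theorem processChild_offset (parent : Node V) (tgt : ℕ) (σ : RS V) (c : V) :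
    (processChild P h d parent tgt σ c).offset = σ.offset := by
  rcases processChild_cases P h d parent tgt σ c with he | ⟨x, -, -, -, he | ⟨he, -⟩⟩ <;>
    simp only [he, insertOpen]

theorem processChild_depth (parent : Node V) (tgt : ℕ) (σ : RS V) (c : V) :
    (processChild P h d parent tgt σ c).depth = σ.depth := by
  rcases processChild_cases P h d parent tgt σ c with he | ⟨x, -, -, -, he | ⟨he, -⟩⟩ <;>
    simp only [he, insertOpen]

theorem processChild_getD_of_ne (parent : Node V) {tgt j : ℕ} (σ : RS V) (c : V) (hj : j ≠ tgt) :
    (processChild P h d parent tgt σ c).openlists.getD j [] = σ.openlists.getD j [] := by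
  rcases processChild_cases P h d parent tgt σ c with he | ⟨x, -, -, -, he | ⟨he, -⟩⟩
  · rw [he]
  · rw [he]
  · rw [he, insertOpen_getD_of_ne d x hj]

theorem incCost_processChild_le (hnonneg : ∀ v, 0 ≤ h v) (parent : Node V) (tgt : ℕ)
    (σ : RS V) (c : V) : incCost (processChild P h d parent tgt σ c) ≤ incCost σ := by
  rcases processChild_cases P h d parent tgt σ c with he | ⟨x, -, -, hf, he | ⟨he, -⟩⟩ <;>
    rw [he]
  · calc ((x.g : ℚ) : WithTop ℚ) ≤ ((x.g + h c : ℚ) : WithTop ℚ) :=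
          WithTop.coe_le_coe.2 (le_add_of_nonneg_right (hnonneg c))
      _ ≤ incCost σ := hf.le
  · rfl

theorem mem_processChild {parent : Node V} {tgt j : ℕ} {σ : RS V} {c : V}
    (hc : c ∈ P.succ parent.state) {x : Node V}
    (hx : x ∈ (processChild P h d parent tgt σ c).openlists.getD j []) :
    x ∈ σ.openlists.getD j [] ∨ (j = tgt ∧ IsAdmittedChild P h (incCost σ) σ.closed parent x) := by
  rcases processChild_cases P h d parent tgt σ c with he | ⟨y, rfl, hg, hf, he | ⟨he, hcl⟩⟩ <;>
    rw [he] at hx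
  · exact Or.inl hx
  · exact Or.inl hx
  · rcases mem_insertOpen d hx with hx | ⟨rfl, rfl⟩
    · exact Or.inl hx
    · exact Or.inr ⟨rfl, hc, hg, hf, hcl⟩

theorem expandNode_closed (parent : Node V) (tgt : ℕ) (σ : RS V) :
    (expandNode P h d parent tgt σ).closed = σ.closed :=
  List.foldl_invariant (fun σ' : RS V => σ'.closed = σ.closed)
    (fun σ' c _ hσ' => (processChild_closed parent tgt σ' c).trans hσ') rfl

theorem expandNode_offset (parent : Node V) (tgt : ℕ) (σ : RS V) :
    (expandNode P h d parent tgt σ).offset = σ.offset :=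
  List.foldl_invariant (fun σ' : RS V => σ'.offset = σ.offset)
    (fun σ' c _ hσ' => (processChild_offset parent tgt σ' c).trans hσ') rfl

theorem expandNode_depth (parent : Node V) (tgt : ℕ) (σ : RS V) :
    (expandNode P h d parent tgt σ).depth = σ.depth :=
  List.foldl_invariant (fun σ' : RS V => σ'.depth = σ.depth)
    (fun σ' c _ hσ' => (processChild_depth parent tgt σ' c).trans hσ') rfl

theorem expandNode_getD_of_ne (parent : Node V) {tgt j : ℕ} (σ : RS V) (hj : j ≠ tgt) :
    (expandNode P h d parent tgt σ).openlists.getD j [] = σ.openlists.getD j [] :=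
  List.foldl_invariant (fun σ' : RS V => σ'.openlists.getD j [] = σ.openlists.getD j [])
    (fun σ' c _ hσ' => (processChild_getD_of_ne parent σ' c hj).trans hσ') rfl

theorem incCost_expandNode_le (hnonneg : ∀ v, 0 ≤ h v) (parent : Node V) (tgt : ℕ)
    (σ : RS V) : incCost (expandNode P h d parent tgt σ) ≤ incCost σ :=
  List.foldl_invariant (fun σ' : RS V => incCost σ' ≤ incCost σ)
    (fun σ' c _ hσ' => (incCost_processChild_le hnonneg parent tgt σ' c).trans hσ') le_rfl

theorem mem_expandNode (hnonneg : ∀ v, 0 ≤ h v) {parent : Node V} {tgt j : ℕ} {σ : RS V}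
    {x : Node V} (hx : x ∈ (expandNode P h d parent tgt σ).openlists.getD j []) :
    x ∈ σ.openlists.getD j [] ∨ (j = tgt ∧ IsAdmittedChild P h (incCost σ) σ.closed parent x) := by
  let Q := fun σ' : RS V => incCost σ' ≤ incCost σ ∧ σ'.closed = σ.closed ∧ ∀ j x,
    x ∈ σ'.openlists.getD j [] →
      x ∈ σ.openlists.getD j [] ∨ (j = tgt ∧ IsAdmittedChild P h (incCost σ) σ.closed parent x)
  have hQ : Q (expandNode P h d parent tgt σ) := by
    refine List.foldl_invariant Q (fun σ' c hc ⟨hinc, hcl, hmem⟩ => ⟨?_, ?_, ?_⟩)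
      ⟨le_rfl, rfl, fun _ _ => Or.inl⟩
    · exact (incCost_processChild_le hnonneg parent tgt σ' c).trans hinc
    · exact (processChild_closed parent tgt σ' c).trans hcl
    · intro j x hx
      rcases mem_processChild (Finset.mem_toList.1 hc) hx with hx | ⟨rfl, hadm⟩
      · exact hmem j x hx
      · refine Or.inr ⟨rfl, hadm.mem_succ, hadm.g_eq, hadm.f_lt.trans_le hinc, ?_⟩
        rw [← hcl]
        exact hadm.lt_closed
  exact hQ.2.2 j x hx

end Expansion

section Trim

theorem trimFront_snd : ∀ l : List (List (Node V)), (trimFront l).2 = l.drop (trimFront l).1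
  | [] => rfl
  | [] :: rest => trimFront_snd rest
  | (_ :: _) :: _ => rfl

theorem trimFront_snd_head_ne_nil :
    ∀ {l : List (List (Node V))} {y : List (Node V)} {t : List (List (Node V))},
      (trimFront l).2 = y :: t → y ≠ []
  | [] :: rest, _, _, hl => trimFront_snd_head_ne_nil (l := rest) hl
  | (_ :: _) :: _, _, _, hl => by
    cases hl
    exact List.cons_ne_nil _ _

theorem done_iff_all_isEmpty (σ : RS V) : Done σ ↔ σ.openlists.all List.isEmpty := by
  simp [Done, List.isEmpty_iff]

theorem trim_openlists (σ : RS V) :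
    (trim σ).openlists = (trimFront σ.openlists).2.rdropWhile List.isEmpty := rfl

theorem mem_trim {σ : RS V} {i : ℕ} {x : Node V} (hx : x ∈ (trim σ).openlists.getD i []) :
    x ∈ σ.openlists.getD ((trimFront σ.openlists).1 + i) [] := by
  have hx' := (List.rdropWhile_prefix List.isEmpty _).mem_getD hx
  rwa [trimFront_snd, List.getD_drop] at hx'

theorem trim_front (σ : RS V) :
    (trim σ).openlists.getD 0 [] = (trimFront σ.openlists).2.getD 0 [] := by
  rw [trim_openlists]
  rcases hl : (trimFront σ.openlists).2 with _ | ⟨y, t⟩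
  · rfl
  · have hne : (y :: t).rdropWhile List.isEmpty ≠ [] := fun h0 => trimFront_snd_head_ne_nil hl
      (List.isEmpty_iff.1 (List.rdropWhile_eq_nil_iff.1 h0 y List.mem_cons_self))
    obtain ⟨u, hu⟩ := List.rdropWhile_prefix List.isEmpty (y :: t)
    obtain ⟨z, s, hzs⟩ := List.exists_cons_of_ne_nil hne
    rw [hzs] at hu ⊢
    cases hu
    rfl

theorem trim_front_ne_nil_of_not_done {σ : RS V} (hσ : ¬ Done (trim σ)) :
    (trim σ).openlists.getD 0 [] ≠ [] := by
  rw [trim_front]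
  rcases hl : (trimFront σ.openlists).2 with _ | ⟨y, t⟩
  · refine absurd (fun l hl' => ?_) hσ
    rw [trim_openlists, hl] at hl'
    exact absurd hl' List.not_mem_nil
  · exact trimFront_snd_head_ne_nil hl

theorem trim_offset_lt_or_front_eq (σ : RS V) :
    σ.offset < (trim σ).offset ∨
      ((trim σ).offset = σ.offset ∧ (trim σ).openlists.getD 0 [] = σ.openlists.getD 0 []) := by
  rw [trim_front]
  dsimp only [trim]
  rcases σ.openlists with _ | ⟨_ | ⟨y, ys⟩, t⟩
  · exact Or.inr ⟨rfl, rfl⟩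
  · exact Or.inl (by simp [trimFront])
  · exact Or.inr ⟨rfl, rfl⟩

end Trim

section Invariants

variable (a : ℕ) in
def appendEmpty (σ : RS V) : RS V :=
  { σ with openlists := σ.openlists ++ List.replicate a [] }

def ForallOpen (Φ : ℕ → Node V → Prop) (σ : RS V) : Prop :=
  ∀ i x, x ∈ σ.openlists.getD i [] → Φ (σ.offset + i) x

variable {Φ : ℕ → Node V → Prop}

theorem ForallOpen.trim {σ : RS V} (hσ : ForallOpen Φ σ) : ForallOpen Φ (trim σ) := by
  intro i x hx
  show Φ (σ.offset + (trimFront σ.openlists).1 + i) x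
  rw [add_assoc]
  exact hσ _ x (mem_trim hx)

theorem ForallOpen.appendEmpty {σ : RS V} (hσ : ForallOpen Φ σ) (a : ℕ) :
    ForallOpen Φ (appendEmpty a σ) := by
  intro i x hx
  exact hσ i x ((List.getD_append_replicate _ _ a i).symm ▸ hx)

theorem ForallOpen.offset_le_ceil {c₀ : ℚ} (hc₀ : 0 < c₀) {σ : RS V}
    (hσ : ForallOpen (fun k x => ((k : ℚ) + 1) * c₀ ≤ x.g) σ) {x : Node V}
    (hx : x ∈ σ.openlists.getD 0 []) {M : ℚ} (hM : x.g ≤ M) : σ.offset ≤ ⌈M / c₀⌉₊ := by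
  have hx' := hσ 0 x hx
  rw [add_zero] at hx'
  have : (σ.offset : ℚ) ≤ M / c₀ := by
    rw [le_div_iff₀ hc₀]
    linarith
  exact_mod_cast this.trans (Nat.le_ceil _)

def BoundedByIncumbent (h : V → ℚ) (B : ℚ) (Λ : ℕ) (σ : RS V) : Prop :=
  incCost σ ≤ B ∧ ForallOpen (fun k x => k ≤ Λ ∨ x.g + h x.state < B) σ

def closedSet (σ : RS V) : Set V := {v | (σ.closed v).isSome}

def ClosedBounded (m : ℚ) (S : Set V) (σ : RS V) : Prop :=
  closedSet σ = S ∧ (∀ v g, σ.closed v = some g → g ≤ m) ∧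
    ForallOpen (fun _ x => x.state ∈ S → x.g ≤ m) σ

theorem exists_closedBounded [Finite V] (σ : RS V) :
    ∃ m, ClosedBounded m (closedSet σ) σ := by
  obtain ⟨m₁, hm₁⟩ := (Set.finite_range fun v => (σ.closed v).getD 0).bddAbove
  obtain ⟨m₂, hm₂⟩ := (σ.openlists.flatten.map Node.g).toFinset.bddAbove
  refine ⟨max m₁ m₂, rfl, fun v g hv => ?_, fun i x hx _ => ?_⟩
  · exact le_max_of_le_left (hm₁ ⟨v, by simp [hv]⟩)
  · exact le_max_of_le_right
      (hm₂ (List.mem_toFinset.2 (List.mem_map_of_mem (List.mem_flatten_of_mem_getD hx))))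

end Invariants

variable [DecidableEq V]

section Selection

variable {P : SearchProblem V} {h d : V → ℚ}

theorem selectExpand_offset (σ : RS V) (i : ℕ) : (selectExpand P h d σ i).offset = σ.offset := by
  dsimp only [selectExpand]
  split
  · rfl
  · rw [expandNode_offset]

theorem selectExpand_depth (σ : RS V) (i : ℕ) : (selectExpand P h d σ i).depth = σ.depth := by
  dsimp only [selectExpand]
  split
  · rfl
  · rw [expandNode_depth]

theorem incCost_selectExpand_le (hnonneg : ∀ v, 0 ≤ h v) (σ : RS V) (i : ℕ) :
    incCost (selectExpand P h d σ i) ≤ incCost σ := by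
  dsimp only [selectExpand]
  split
  · exact le_rfl
  · exact incCost_expandNode_le hnonneg _ _ _

theorem selectExpand_closed_eq_some (σ : RS V) (i : ℕ) {v : V} {g : ℚ}
    (hv : (selectExpand P h d σ i).closed v = some g) :
    σ.closed v = some g ∨ ∃ n ∈ σ.openlists.getD i [], n.state = v ∧ n.g = g := by
  revert hv
  dsimp only [selectExpand]
  split
  · exact Or.inl
  · next n hn =>
    rw [expandNode_closed]
    dsimp only
    split_ifs with hvn
    · intro hg
      exact Or.inr ⟨n, mem_of_popGood_fst h _ hn, hvn.symm, Option.some_injective _ hg⟩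
    · exact Or.inl

theorem selectExpand_closed_isSome (σ : RS V) (i : ℕ) {v : V} (hv : (σ.closed v).isSome) :
    ((selectExpand P h d σ i).closed v).isSome := by
  dsimp only [selectExpand]
  split
  · exact hv
  · rw [expandNode_closed]
    dsimp only
    split_ifs
    · rfl
    · exact hv

theorem mem_selectExpand (hnonneg : ∀ v, 0 ≤ h v) {σ : RS V} {i j : ℕ} {x : Node V}
    (hx : x ∈ (selectExpand P h d σ i).openlists.getD j []) :
    x ∈ σ.openlists.getD j [] ∨ ∃ n ∈ σ.openlists.getD i [], j = i + 1 ∧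
      IsAdmittedChild P h (incCost σ) (selectExpand P h d σ i).closed n x := by
  have popped : ∀ {τ : RS V}, τ.openlists = σ.openlists.set i
      (popGood h (incCost σ) (σ.openlists.getD i [])).2.1 →
      x ∈ τ.openlists.getD j [] → x ∈ σ.openlists.getD j [] := fun hτ hx => by
    rw [hτ] at hx
    rcases List.mem_getD_set hx with ⟨rfl, hx⟩ | hx
    · exact ((popGood_snd_suffix_tail h _ _).trans (List.tail_suffix _)).subset hx
    · exact hx
  revert hx
  dsimp only [selectExpand]
  split
  · exact fun hx => Or.inl (popped rfl hx)
  · next n hn =>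
    intro hx
    rcases mem_expandNode hnonneg hx with hx | ⟨rfl, hadm⟩
    · exact Or.inl (popped rfl hx)
    · refine Or.inr ⟨n, mem_of_popGood_fst h _ hn, rfl, ?_⟩
      rw [expandNode_closed]
      exact hadm

theorem selectExpand_getD_of_ne_succ (σ : RS V) {i j : ℕ} (hj : j ≠ i + 1) :
    (selectExpand P h d σ i).openlists.getD j [] =
      (σ.openlists.set i (popGood h (incCost σ) (σ.openlists.getD i [])).2.1).getD j [] := by
  dsimp only [selectExpand]
  split
  · rfl
  · rw [expandNode_getD_of_ne _ _ hj]

theorem length_getD_selectExpand_le (σ : RS V) {i j : ℕ} (hj : j ≠ i + 1) :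
    ((selectExpand P h d σ i).openlists.getD j []).length ≤ (σ.openlists.getD j []).length := by
  rw [selectExpand_getD_of_ne_succ σ hj]
  rcases eq_or_ne i j with rfl | hij
  · rcases lt_or_ge i σ.openlists.length with hi | hi
    · simp only [List.getD_eq_getElem?_getD, List.getElem?_set_self hi, Option.getD_some]
      exact ((popGood_snd_suffix_tail h _ _).trans (List.tail_suffix _)).length_le
    · rw [List.set_eq_of_length_le hi]
  · rw [List.getD_set_of_ne _ _ _ hij]

theorem length_getD_selectExpand_self_lt (σ : RS V) {i : ℕ} (hne : σ.openlists.getD i [] ≠ []) :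
    ((selectExpand P h d σ i).openlists.getD i []).length < (σ.openlists.getD i []).length := by
  have hi : i < σ.openlists.length := by
    by_contra! hi
    exact hne (List.getD_eq_default _ _ hi)
  rw [selectExpand_getD_of_ne_succ σ (Nat.succ_ne_self i).symm]
  simp only [List.getD_eq_getElem?_getD, List.getElem?_set_self hi, Option.getD_some]
  calc _ ≤ (σ.openlists.getD i []).tail.length := (popGood_snd_suffix_tail h _ _).length_le
    _ < _ := by
      rw [List.length_tail]
      exact Nat.sub_lt (List.length_pos_of_ne_nil hne) one_pos

theorem selectExpand_closed_head (σ : RS V) {i : ℕ} (hinc : σ.incumbent = none) {x : Node V}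
    {rest : List (Node V)} (hfront : σ.openlists.getD i [] = x :: rest) :
    (selectExpand P h d σ i).closed x.state = some x.g := by
  have hsel : (popGood h (incCost σ) (σ.openlists.getD i [])).1 = some x := by
    rw [hfront, incCost, hinc, popGood_top_cons]
  dsimp only [selectExpand]
  rw [hsel]
  dsimp only
  rw [expandNode_closed]
  exact if_pos rfl

end Selection

section MainLoop

variable (P : SearchProblem V) (h d : V → ℚ) (a : ℕ) in
inductive IterStep : RS V → RS V → Prop
  | select (σ : RS V) (i : ℕ) : IterStep σ (selectExpand P h d σ i)
  | append (σ : RS V) : IterStep σ (appendEmpty a σ)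

variable {P : SearchProblem V} {h d : V → ℚ} {a : ℕ}

theorem IterStep.reflTransGen_induction {Q : RS V → Prop}
    (hselect : ∀ σ i, Q σ → Q (selectExpand P h d σ i)) (happend : ∀ σ, Q σ → Q (appendEmpty a σ))
    {σ τ : RS V} (hστ : ReflTransGen (IterStep P h d a) σ τ) (hσ : Q σ) : Q τ := by
  induction hστ with
  | refl => exact hσ
  | tail _ hstep ih =>
    cases hstep with
    | select i => exact hselect _ i ih
    | append => exact happend _ ih

theorem reflTransGen_foldl_selectExpand {α : Type*} (l : List α) (g : α → ℕ) (σ : RS V) :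
    ReflTransGen (IterStep P h d a) σ (l.foldl (fun σ' x => selectExpand P h d σ' (g x)) σ) :=
  reflTransGen_foldl l (fun σ' x => .single (.select σ' (g x))) σ

theorem mainIter_eq_trim (σ : RS V) (hσ : ¬ σ.openlists.all List.isEmpty) :
    ∃ τ, ReflTransGen (IterStep P h d a) σ τ ∧
      mainIter P h d a σ = trim { τ with depth := τ.depth + a } := by
  rw [mainIter, if_neg hσ]
  refine ⟨_, ReflTransGen.trans (b := appendEmpty a
    ((List.range (σ.openlists.length - 1)).foldl (selectExpand P h d) σ)) ?_ ?_, rfl⟩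
  · exact (reflTransGen_foldl_selectExpand _ id σ).tail (.append _)
  · exact reflTransGen_foldl _ (fun σ' k => reflTransGen_foldl_selectExpand _ _ σ') _

theorem mainIter_eq_trim_of_select_front (σ : RS V) (hfront : σ.openlists.getD 0 [] ≠ [])
    (hdepth : 1 ≤ σ.depth) (ha : 1 ≤ a) :
    ∃ σ₀ τ, (σ₀ = σ ∨ σ₀ = appendEmpty a σ) ∧
      ReflTransGen (IterStep P h d a) (selectExpand P h d σ₀ 0) τ ∧
      mainIter P h d a σ = trim { τ with depth := τ.depth + a } := by
  obtain ⟨l₀, ls, hσl⟩ : ∃ l₀ ls, σ.openlists = l₀ :: ls :=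
    List.exists_cons_of_ne_nil (fun h0 => hfront (by rw [h0]; rfl))
  have hl₀ : l₀ ≠ [] := by rwa [hσl] at hfront
  have hne : ¬ σ.openlists.all List.isEmpty := by
    simp [hσl, List.isEmpty_iff, hl₀]
  obtain ⟨D, hD⟩ : ∃ D, σ.depth = D + 1 := ⟨σ.depth - 1, by omega⟩
  obtain ⟨a, rfl⟩ : ∃ a', a = a' + 1 := ⟨a - 1, by omega⟩
  rw [mainIter, if_neg hne]
  rcases ls with _ | ⟨l₁, ls⟩
  · refine ⟨appendEmpty (a + 1) σ, _, Or.inr rfl, ?_, rfl⟩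
    have hL : σ.openlists.length - 1 = 0 := by simp [hσl]
    rw [hL, hD, List.range_zero, List.foldl_nil, List.range_succ_eq_map (n := a), List.foldl_cons,
      List.range_succ_eq_map (n := D), List.foldl_cons]
    exact (reflTransGen_foldl_selectExpand _ _ _).trans
      (reflTransGen_foldl _ (fun σ' k => reflTransGen_foldl_selectExpand _ _ σ') _)
  · refine ⟨σ, _, Or.inl rfl, ?_, rfl⟩
    have hL : σ.openlists.length - 1 = ls.length + 1 := by simp [hσl]
    rw [hL, List.range_succ_eq_map (n := ls.length), List.foldl_cons]
    exact ((reflTransGen_foldl_selectExpand _ _ _).tail (.append _)).trans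
      (reflTransGen_foldl _ (fun σ' k => reflTransGen_foldl_selectExpand _ _ σ') _)

theorem mainIter_induction (Q : RS V → Prop)
    (hselect : ∀ σ i, Q σ → Q (selectExpand P h d σ i)) (happend : ∀ σ, Q σ → Q (appendEmpty a σ))
    (hfinish : ∀ σ, Q σ → Q (trim { σ with depth := σ.depth + a })) {σ : RS V} (hσ : Q σ) :
    Q (mainIter P h d a σ) := by
  by_cases hall : σ.openlists.all List.isEmpty
  · rwa [mainIter, if_pos hall]
  · obtain ⟨τ, hστ, he⟩ := mainIter_eq_trim σ hall
    rw [he]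
    exact hfinish τ (IterStep.reflTransGen_induction hselect happend hστ hσ)

theorem mainIter_front_ne_nil {σ : RS V} (hσ : ¬ Done (mainIter P h d a σ)) :
    (mainIter P h d a σ).openlists.getD 0 [] ≠ [] := by
  by_cases hall : σ.openlists.all List.isEmpty
  · rw [mainIter, if_pos hall] at hσ
    exact absurd ((done_iff_all_isEmpty σ).2 hall) hσ
  · obtain ⟨τ, -, he⟩ := mainIter_eq_trim σ hall
    rw [he] at hσ ⊢
    exact trim_front_ne_nil_of_not_done hσ

theorem le_mainIter_offset (σ : RS V) : σ.offset ≤ (mainIter P h d a σ).offset :=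
  mainIter_induction (fun τ => σ.offset ≤ τ.offset)
    (fun τ i hτ => (selectExpand_offset τ i).symm ▸ hτ) (fun _ => id)
    (fun _ hτ => hτ.trans (Nat.le_add_right _ _)) le_rfl

theorem le_mainIter_depth (σ : RS V) : σ.depth ≤ (mainIter P h d a σ).depth :=
  mainIter_induction (fun τ => σ.depth ≤ τ.depth)
    (fun τ i hτ => (selectExpand_depth τ i).symm ▸ hτ) (fun _ => id)
    (fun _ hτ => hτ.trans (Nat.le_add_right _ _)) le_rfl

theorem mainIter_closed_isSome {σ : RS V} {v : V} (hv : (σ.closed v).isSome) :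
    ((mainIter P h d a σ).closed v).isSome :=
  mainIter_induction (fun τ => (τ.closed v).isSome) (fun τ i => selectExpand_closed_isSome τ i)
    (fun _ => id) (fun _ => id) hv

/-- The front open list loses its head in every iteration, since level `0` is selected from at
least once; trimming may then discard it altogether. -/
theorem mainIter_progress {σ : RS V} {x : Node V} {rest : List (Node V)}
    (hfront : σ.openlists.getD 0 [] = x :: rest) (hdepth : 1 ≤ σ.depth) (ha : 1 ≤ a) :
    σ.offset < (mainIter P h d a σ).offset ∨
      ((mainIter P h d a σ).offset = σ.offset ∧
        ((mainIter P h d a σ).openlists.getD 0 []).length < (x :: rest).length) := by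
  obtain ⟨σ₀, τ, hσ₀, hτ, he⟩ :=
    mainIter_eq_trim_of_select_front σ (hfront ▸ List.cons_ne_nil x rest) hdepth ha
  have h₀ : σ₀.offset = σ.offset ∧ σ₀.openlists.getD 0 [] = x :: rest := by
    rcases hσ₀ with rfl | rfl
    · exact ⟨rfl, hfront⟩
    · exact ⟨rfl, (List.getD_append_replicate _ _ _ _).trans hfront⟩
  have hτ' := IterStep.reflTransGen_induction
    (Q := fun τ => τ.offset = σ.offset ∧ (τ.openlists.getD 0 []).length < (x :: rest).length)
    (fun τ i ⟨hoff, hlen⟩ =>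
      ⟨(selectExpand_offset τ i).trans hoff,
        (length_getD_selectExpand_le τ (Nat.succ_ne_zero i).symm).trans_lt hlen⟩)
    (fun τ hτ => ⟨hτ.1, by rw [appendEmpty, List.getD_append_replicate]; exact hτ.2⟩) hτ
    ⟨(selectExpand_offset σ₀ 0).trans h₀.1,
      h₀.2 ▸ length_getD_selectExpand_self_lt σ₀ (h₀.2 ▸ List.cons_ne_nil x rest)⟩
  rw [he]
  rcases trim_offset_lt_or_front_eq { τ with depth := τ.depth + a } with hlt | ⟨hoff, hfr⟩
  · exact Or.inl (hτ'.1 ▸ hlt)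
  · exact Or.inr ⟨hoff.trans hτ'.1, hfr ▸ hτ'.2⟩

/-- Without an incumbent nothing is pruned, so the node selected from level `0` is the head. -/
theorem mainIter_closed_head {σ : RS V} {x : Node V} {rest : List (Node V)}
    (hfront : σ.openlists.getD 0 [] = x :: rest) (hdepth : 1 ≤ σ.depth) (ha : 1 ≤ a)
    (hinc : σ.incumbent = none) : ((mainIter P h d a σ).closed x.state).isSome := by
  obtain ⟨σ₀, τ, hσ₀, hτ, he⟩ :=
    mainIter_eq_trim_of_select_front σ (hfront ▸ List.cons_ne_nil x rest) hdepth ha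
  have h₀ : σ₀.incumbent = none ∧ σ₀.openlists.getD 0 [] = x :: rest := by
    rcases hσ₀ with rfl | rfl
    · exact ⟨hinc, hfront⟩
    · exact ⟨hinc, (List.getD_append_replicate _ _ _ _).trans hfront⟩
  rw [he]
  show (τ.closed x.state).isSome
  refine IterStep.reflTransGen_induction (Q := fun τ => (τ.closed x.state).isSome)
    (fun τ i => selectExpand_closed_isSome τ i) (fun _ => id) hτ ?_
  rw [selectExpand_closed_head σ₀ h₀.1 h₀.2]
  rfl

end MainLoop

section Preservation

variable {P : SearchProblem V} {h d : V → ℚ} {a : ℕ}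

theorem ForallOpen.selectExpand (hnonneg : ∀ v, 0 ≤ h v) {σ : RS V} {i : ℕ}
    (hσ : ForallOpen Φ σ)
    (hchild : ∀ n ∈ σ.openlists.getD i [], ∀ x,
      IsAdmittedChild P h (incCost σ) (selectExpand P h d σ i).closed n x →
        Φ (σ.offset + i + 1) x) :
    ForallOpen Φ (selectExpand P h d σ i) := by
  intro j x hx
  rw [selectExpand_offset]
  rcases mem_selectExpand hnonneg hx with hx | ⟨n, hn, rfl, hadm⟩
  · exact hσ j x hx
  · exact hchild n hn x hadm

theorem ForallOpen.mainIter_of_cost_ge (hnonneg : ∀ v, 0 ≤ h v) {c₀ : ℚ}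
    (hcost : ∀ u v, v ∈ P.succ u → c₀ ≤ P.cost u v) {σ : RS V}
    (hσ : ForallOpen (fun k x => ((k : ℚ) + 1) * c₀ ≤ x.g) σ) :
    ForallOpen (fun k x => ((k : ℚ) + 1) * c₀ ≤ x.g) (mainIter P h d a σ) := by
  refine mainIter_induction _ (fun τ i hτ => hτ.selectExpand hnonneg fun n hn x hx => ?_)
    (fun τ hτ => hτ.appendEmpty a) (fun τ hτ => ForallOpen.trim hτ) hσ
  have hn' := hτ i n hn
  have hx' := hcost _ _ hx.mem_succ
  rw [hx.g_eq]
  push_cast at hn' ⊢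
  linarith

theorem BoundedByIncumbent.mainIter (hnonneg : ∀ v, 0 ≤ h v) {B : ℚ} {Λ : ℕ} {σ : RS V}
    (hσ : BoundedByIncumbent h B Λ σ) : BoundedByIncumbent h B Λ (mainIter P h d a σ) := by
  refine mainIter_induction _ (fun τ i hτ => ⟨(incCost_selectExpand_le hnonneg τ i).trans hτ.1,
      hτ.2.selectExpand hnonneg fun n _ x hx => Or.inr ?_⟩)
    (fun τ hτ => ⟨hτ.1, hτ.2.appendEmpty a⟩) (fun τ hτ => ⟨hτ.1, ForallOpen.trim hτ.2⟩) hσ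
  exact WithTop.coe_lt_coe.1 (hx.f_lt.trans_le hτ.1)

theorem closedSet_subset_selectExpand (σ : RS V) (i : ℕ) :
    closedSet σ ⊆ closedSet (selectExpand P h d σ i) :=
  fun _ => selectExpand_closed_isSome σ i

theorem closedSet_subset_mainIter (σ : RS V) : closedSet σ ⊆ closedSet (mainIter P h d a σ) :=
  fun _ => mainIter_closed_isSome

/-- A selected node whose state stays in `S` was already closed, so its `g` is at most `m`. -/
theorem closedBounded_selectExpand (hnonneg : ∀ v, 0 ≤ h v) {m : ℚ} {S : Set V} {σ : RS V}
    {i : ℕ} (hσ : ClosedBounded m S σ) (hS : closedSet (selectExpand P h d σ i) ⊆ S) :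
    ClosedBounded m S (selectExpand P h d σ i) := by
  obtain ⟨hset, hclosed, hopen⟩ := hσ
  have hset' : closedSet (selectExpand P h d σ i) = S :=
    hS.antisymm (hset ▸ closedSet_subset_selectExpand σ i)
  have hclosed' : ∀ v g, (selectExpand P h d σ i).closed v = some g → g ≤ m := by
    intro v g hv
    rcases selectExpand_closed_eq_some σ i hv with hv' | ⟨n, hn, rfl, rfl⟩
    · exact hclosed _ _ hv'
    · exact hopen i n hn (hset' ▸ (by simp [closedSet, hv]))
  refine ⟨hset', hclosed', hopen.selectExpand hnonneg fun n _ x hx hxS => ?_⟩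
  obtain ⟨g, hg⟩ := Option.isSome_iff_exists.1 (hset'.symm ▸ hxS : x.state ∈ closedSet _)
  exact (hx.lt_closed g hg).le.trans (hclosed' _ _ hg)

/-- Preservation needs `S` to bound the closed set only at the end of the iteration, because
closed sets only grow. -/
theorem ClosedBounded.mainIter (hnonneg : ∀ v, 0 ≤ h v) {m : ℚ} {S : Set V} {σ : RS V}
    (hσ : ClosedBounded m S σ) (hS : closedSet (mainIter P h d a σ) ⊆ S) :
    ClosedBounded m S (mainIter P h d a σ) := by
  refine mainIter_induction (fun τ => closedSet τ ⊆ S → ClosedBounded m S τ)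
    (fun τ i hτ hsub =>
      closedBounded_selectExpand hnonneg (hτ ((closedSet_subset_selectExpand τ i).trans hsub)) hsub)
    (fun τ hτ hsub => ?_) (fun τ hτ hsub => ?_) (fun _ => hσ) hS
  · obtain ⟨hset, hclosed, hopen⟩ := hτ hsub
    exact ⟨hset, hclosed, hopen.appendEmpty a⟩
  · obtain ⟨hset, hclosed, hopen⟩ := hτ hsub
    exact ⟨hset, hclosed, ForallOpen.trim hopen⟩

end Preservation

section Run

variable {P : SearchProblem V} {h d : V → ℚ} {a : ℕ}

theorem run_succ (t : ℕ) : run P h d a (t + 1) = mainIter P h d a (run P h d a t) :=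
  Function.iterate_succ_apply' _ _ _

theorem run_offset_mono : Monotone fun t => (run P h d a t).offset :=
  monotone_nat_of_le_succ fun t => by
    rw [run_succ]
    exact le_mainIter_offset _

theorem closedSet_run_mono : Monotone fun t => closedSet (run P h d a t) :=
  monotone_nat_of_le_succ fun t => by
    rw [run_succ]
    exact closedSet_subset_mainIter _

theorem one_le_run_depth (t : ℕ) : 1 ≤ (run P h d a t).depth := by
  induction t with
  | zero =>
    show 1 ≤ (initRS P h d).depth
    rw [initRS, expandNode_depth]
  | succ t ih =>
    rw [run_succ]
    exact ih.trans (le_mainIter_depth _)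

theorem forallOpen_run_g_ge (hnonneg : ∀ v, 0 ≤ h v) {c₀ : ℚ}
    (hcost : ∀ u v, v ∈ P.succ u → c₀ ≤ P.cost u v) (t : ℕ) :
    ForallOpen (fun k x => ((k : ℚ) + 1) * c₀ ≤ x.g) (run P h d a t) := by
  induction t with
  | zero =>
    intro i x hx
    rcases mem_expandNode hnonneg hx with hx | ⟨rfl, hadm⟩
    · rcases i with _ | _ <;> exact absurd hx List.not_mem_nil
    · have h₀ : (run P h d a 0).offset = 0 := expandNode_offset _ _ _
      rw [h₀, hadm.g_eq]
      simpa using hcost _ _ hadm.mem_succ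
  | succ t ih =>
    rw [run_succ]
    exact ih.mainIter_of_cost_ge hnonneg hcost

theorem run_succ_front_ne_nil (hnd : ∀ t, ¬ Done (run P h d a t)) (t : ℕ) :
    (run P h d a (t + 1)).openlists.getD 0 [] ≠ [] := by
  have hσ := hnd (t + 1)
  rw [run_succ] at hσ ⊢
  exact mainIter_front_ne_nil hσ

theorem exists_run_offset_lt (hnd : ∀ t, ¬ Done (run P h d a t)) (ha : 1 ≤ a) (t : ℕ) :
    ∃ t', (run P h d a (t + 1)).offset < (run P h d a t').offset := by
  suffices ∀ K t, ((run P h d a (t + 1)).openlists.getD 0 []).length ≤ K →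
      ∃ t', (run P h d a (t + 1)).offset < (run P h d a t').offset from this _ t le_rfl
  intro K
  induction K with
  | zero =>
    intro t hK
    exact absurd (List.eq_nil_of_length_eq_zero (Nat.le_zero.1 hK)) (run_succ_front_ne_nil hnd t)
  | succ K ih =>
    intro t hK
    obtain ⟨x, rest, hfr⟩ := List.exists_cons_of_ne_nil (run_succ_front_ne_nil hnd t)
    rcases mainIter_progress hfr (one_le_run_depth _) ha with hlt | ⟨heq, hlen⟩
    · exact ⟨t + 2, by rwa [run_succ (t + 1)]⟩
    · rw [← run_succ] at heq hlen
      obtain ⟨t', ht'⟩ := ih (t + 1) (by rw [hfr] at hK; omega)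
      exact ⟨t', heq ▸ ht'⟩

theorem tendsto_run_offset (hnd : ∀ t, ¬ Done (run P h d a t)) (ha : 1 ≤ a) :
    Tendsto (fun t => (run P h d a t).offset) atTop atTop := by
  refine tendsto_atTop_atTop_of_monotone run_offset_mono fun N => ?_
  induction N with
  | zero => exact ⟨0, Nat.zero_le _⟩
  | succ N ih =>
    obtain ⟨t, ht⟩ := ih
    obtain ⟨t', ht'⟩ := exists_run_offset_lt hnd ha t
    exact ⟨t', (ht.trans (run_offset_mono (Nat.le_succ t))).trans_lt ht'⟩

theorem eventually_run_offset_le_of_head (hnonneg : ∀ v, 0 ≤ h v)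
    (hnd : ∀ t, ¬ Done (run P h d a t)) {c₀ : ℚ} (hc₀ : 0 < c₀)
    (hcost : ∀ u v, v ∈ P.succ u → c₀ ≤ P.cost u v) {T N : ℕ} {M : ℚ}
    (hhead : ∀ t, T ≤ t → ∀ x rest, (run P h d a (t + 1)).openlists.getD 0 [] = x :: rest →
      (run P h d a (t + 1)).offset ≤ N ∨ x.g ≤ M) :
    ∀ᶠ t in atTop, (run P h d a t).offset ≤ max N ⌈M / c₀⌉₊ := by
  refine eventually_atTop.2 ⟨T + 1, fun t ht => ?_⟩
  obtain ⟨t, rfl⟩ : ∃ s, t = s + 1 := ⟨t - 1, by omega⟩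
  obtain ⟨x, rest, hfr⟩ := List.exists_cons_of_ne_nil (run_succ_front_ne_nil hnd t)
  rcases hhead t (by omega) x rest hfr with hN | hM
  · exact le_max_of_le_left hN
  · exact le_max_of_le_right ((forallOpen_run_g_ge hnonneg hcost _).offset_le_ceil hc₀
      (hfr ▸ List.mem_cons_self) hM)

theorem eventually_run_offset_le_of_incumbent (hnonneg : ∀ v, 0 ≤ h v)
    (hnd : ∀ t, ¬ Done (run P h d a t)) {c₀ : ℚ} (hc₀ : 0 < c₀)
    (hcost : ∀ u v, v ∈ P.succ u → c₀ ≤ P.cost u v) {t₀ : ℕ}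
    (hinc : (run P h d a t₀).incumbent.isSome) :
    ∃ N, ∀ᶠ t in atTop, (run P h d a t).offset ≤ N := by
  obtain ⟨n₀, hn₀⟩ := Option.isSome_iff_exists.1 hinc
  set Λ := (run P h d a t₀).offset + (run P h d a t₀).openlists.length
  have hB : ∀ t, t₀ ≤ t → BoundedByIncumbent h n₀.g Λ (run P h d a t) := by
    intro t ht
    induction t, ht using Nat.le_induction with
    | base =>
      refine ⟨by simp [incCost, hn₀], fun i x hx => Or.inl ?_⟩
      have := List.lt_length_of_mem_getD hx
      omega
    | succ t _ ih =>
      rw [run_succ]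
      exact ih.mainIter hnonneg
  refine ⟨_, eventually_run_offset_le_of_head hnonneg hnd hc₀ hcost (T := t₀) (N := Λ)
    (M := n₀.g) fun t ht x rest hfr => ?_⟩
  rcases (hB (t + 1) (by omega)).2 0 x (hfr ▸ List.mem_cons_self) with hΛ | hf
  · exact Or.inl hΛ
  · exact Or.inr (by linarith [hnonneg x.state])

theorem eventually_run_offset_le_of_no_incumbent [Finite V] (hnonneg : ∀ v, 0 ≤ h v)
    (hnd : ∀ t, ¬ Done (run P h d a t)) (ha : 1 ≤ a) {c₀ : ℚ} (hc₀ : 0 < c₀)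
    (hcost : ∀ u v, v ∈ P.succ u → c₀ ≤ P.cost u v)
    (hinc : ∀ t, (run P h d a t).incumbent = none) :
    ∃ N, ∀ᶠ t in atTop, (run P h d a t).offset ≤ N := by
  obtain ⟨T, hT⟩ := WellFoundedGT.monotone_chain_condition
    ⟨_, closedSet_run_mono (P := P) (h := h) (d := d) (a := a)⟩
  replace hT : ∀ t, T ≤ t → closedSet (run P h d a t) = closedSet (run P h d a T) :=
    fun t ht => (hT t ht).symm
  obtain ⟨m, hm⟩ := exists_closedBounded (run P h d a T)
  have hB : ∀ t, T ≤ t → ClosedBounded m (closedSet (run P h d a T)) (run P h d a t) := by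
    intro t ht
    induction t, ht using Nat.le_induction with
    | base => exact hm
    | succ t ht ih =>
      have hS := (hT (t + 1) (by omega)).le
      rw [run_succ] at hS ⊢
      exact ih.mainIter hnonneg hS
  refine ⟨_, eventually_run_offset_le_of_head hnonneg hnd hc₀ hcost (T := T) (N := 0) (M := m)
    fun t ht x rest hfr => Or.inr ?_⟩
  have hx := mainIter_closed_head (P := P) (h := h) (d := d) hfr (one_le_run_depth _) ha (hinc _)
  rw [← run_succ] at hx
  have hxS : x.state ∈ closedSet (run P h d a T) := hT (t + 2) (by omega) ▸ hx
  exact (hB (t + 1) (by omega)).2.2 0 x (hfr ▸ List.mem_cons_self) hxS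

end Run

/-- Rectangle search terminates on finite state spaces: if
the set of states is finite and all edge costs are strictly positive, then
for any (nonnegative) heuristic `h` the main loop of rectangle search
executes only finitely many iterations, i.e. after some number `k` of
iterations every open list is empty (after which the main loop does nothing). -/
theorem rectangle_terminates_on_finite
    (V : Type) [DecidableEq V] [Finite V]
    (P : SearchProblem V) (h d : V → ℚ) (a : ℕ) (ha : 1 ≤ a)
    (hpos : EdgeCostsPos P)
    (hnonneg : ∀ v, 0 ≤ h v) :
    ∃ k, Done (run P h d a k) := by
  by_contra! hnd
  obtain ⟨c₀, hc₀, hcost⟩ := hpos.exists_pos_le_cost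
  obtain ⟨N, hN⟩ : ∃ N, ∀ᶠ t in atTop, (run P h d a t).offset ≤ N := by
    by_cases hinc : ∃ t, (run P h d a t).incumbent.isSome
    · obtain ⟨t₀, ht₀⟩ := hinc
      exact eventually_run_offset_le_of_incumbent hnonneg hnd hc₀ hcost ht₀
    · exact eventually_run_offset_le_of_no_incumbent hnonneg hnd ha hc₀ hcost
        fun t => Option.not_isSome_iff_eq_none.1 fun ht => hinc ⟨t, ht⟩
  obtain ⟨t, htN, htN'⟩ := (hN.and ((tendsto_run_offset hnd ha).eventually_gt_atTop N)).exists
  exact absurd htN (not_le.2 htN')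

end RectangleSearchFormal
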